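/- arXiv:1204.6690 — 5 statements merged into one kernel-verified Lean document; each statement's English description precedes it below -/
import Mathlib

section
/- Let f : B^n → C be hyperbolic-harmonic on the unit ball B^n of C^n with ‖f‖_HB = sup_{z∈B^n} (1−|z|²)(|∇̂f(z)| + |∇̂f̄(z)|) < ∞. Then for every pair of distinct points z, w ∈ B^n, the weighted Lipschitz function satisfies L_f(z, w) = (1−|z|²)^{1/2}(1−|w|²)^{1/2}|f(z) − f(w)|/|z − w| ≤ π √n · ‖f‖_HB. -/
open MeasureTheory Metric Complex

noncomputable section

/-- `ℂⁿ` with the Euclidean norm. -/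
abbrev Cn (n : ℕ) := EuclideanSpace ℂ (Fin n)

/-- The Wirtinger derivative `∂f/∂z_k = (∂f/∂x_k - i ∂f/∂y_k)/2`. -/
noncomputable def wdz (n : ℕ) (f : Cn n → ℂ) (z : Cn n) (k : Fin n) : ℂ :=
  (1 / 2 : ℂ) *
    (fderiv ℝ f z (EuclideanSpace.single k 1) -
      Complex.I * fderiv ℝ f z (EuclideanSpace.single k Complex.I))

/-- The Wirtinger derivative `∂f/∂z̄_k = (∂f/∂x_k + i ∂f/∂y_k)/2`. -/
noncomputable def wdzbar (n : ℕ) (f : Cn n → ℂ) (z : Cn n) (k : Fin n) : ℂ :=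
  (1 / 2 : ℂ) *
    (fderiv ℝ f z (EuclideanSpace.single k 1) +
      Complex.I * fderiv ℝ f z (EuclideanSpace.single k Complex.I))

/-- Euclidean norm of a vector of complex numbers. -/
noncomputable def euclNorm (n : ℕ) (v : Fin n → ℂ) : ℝ :=
  Real.sqrt (∑ k, Complex.normSq (v k))

/-- The Laplace–Beltrami operator
`Δ_h u = (1-|z|²)² Σ_k (u_{x_k x_k} + u_{y_k y_k})
  + 4(n-1)(1-|z|²) Σ_k (x_k u_{x_k} + y_k u_{y_k})`. -/
noncomputable def laplaceH (n : ℕ) (u : Cn n → ℝ) (z : Cn n) : ℝ :=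
  (1 - ‖z‖ ^ 2) ^ 2 *
      ∑ k, (fderiv ℝ (fun w => fderiv ℝ u w (EuclideanSpace.single k 1)) z
              (EuclideanSpace.single k 1) +
            fderiv ℝ (fun w => fderiv ℝ u w (EuclideanSpace.single k Complex.I)) z
              (EuclideanSpace.single k Complex.I)) +
    4 * ((n : ℝ) - 1) * (1 - ‖z‖ ^ 2) *
      ∑ k, ((z k).re * fderiv ℝ u z (EuclideanSpace.single k 1) +
            (z k).im * fderiv ℝ u z (EuclideanSpace.single k Complex.I))

/-- A complex-valued function on the unit ball of `ℂⁿ` is hyperbolic-harmonic if it is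
twice continuously differentiable there and its real and imaginary parts are annihilated
by the Laplace–Beltrami operator. -/
def IsHHarmonic (n : ℕ) (f : Cn n → ℂ) : Prop :=
  ContDiffOn ℝ 2 f (ball 0 1) ∧
    ∀ z ∈ ball (0 : Cn n) 1,
      laplaceH n (fun w => (f w).re) z = 0 ∧ laplaceH n (fun w => (f w).im) z = 0
/-- `(1−|z|²)(|∇̂f(z)| + |∇̂f̄(z)|)`, the quantity whose supremum is the Bloch norm. -/
noncomputable def hbExpr (n : ℕ) (f : Cn n → ℂ) (z : Cn n) : ℝ :=
  (1 - ‖z‖ ^ 2) * (euclNorm n (wdz n f z) + euclNorm n (wdzbar n f z))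

/-- The `h`-harmonic Bloch "norm" `‖f‖_HB = sup_{z ∈ Bⁿ} (1−|z|²)(|∇̂f(z)| + |∇̂f̄(z)|)`. -/
noncomputable def hbNorm (n : ℕ) (f : Cn n → ℂ) : ℝ :=
  ⨆ z : ball (0 : Cn n) 1, hbExpr n f z

/-- The weighted Lipschitz function
`L_f(z,w) = (1−|z|²)^{1/2}(1−|w|²)^{1/2}|f(z) − f(w)|/|z − w|`. -/
noncomputable def weightedLip (n : ℕ) (f : Cn n → ℂ) (z w : Cn n) : ℝ :=
  Real.sqrt (1 - ‖z‖ ^ 2) * Real.sqrt (1 - ‖w‖ ^ 2) * ‖f z - f w‖ / ‖z - w‖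

/-!
Along the segment `γ(t) = z + t (w - z)` the Bloch bound gives
`(1 - |γ(t)|²) |(f ∘ γ)'(t)| ≤ ‖f‖_HB |w - z|`, while the triangle inequality, convexity of `s ↦ s²`
and AM–GM give `1 - |γ(t)|² ≥ 2 √(t (1 - t)) (1 - |z|²)^{1/2} (1 - |w|²)^{1/2}`. Integrating over
`[0, 1]` and using `∫₀¹ dt / (2 √(t (1 - t))) = π / 2` bounds `L_f(z, w)` by `π / 2 · ‖f‖_HB`.
The operator norm of `Df(x)` is controlled by `|∇̂f(x)| + |∇̂f̄(x)|` through the Wirtinger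
decomposition `Df(x) v = Σ_k (∂f/∂z_k v_k + ∂f/∂z̄_k v̄_k)` and Cauchy–Schwarz.
-/

open Set
open scoped Real ComplexConjugate

lemma hasDerivAt_arcsin_two_mul_sub_one {t : ℝ} (ht : t ∈ Ioo 0 1) :
    HasDerivAt (fun s => Real.arcsin (2 * s - 1)) (1 / √(t * (1 - t))) t := by
  have hsqrt : √(1 - (2 * t - 1) ^ 2) = 2 * √(t * (1 - t)) := by
    rw [show 1 - (2 * t - 1) ^ 2 = 2 ^ 2 * (t * (1 - t)) by ring,
      Real.sqrt_mul (by norm_num), Real.sqrt_sq zero_le_two]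
  have h := (Real.hasDerivAt_arcsin (x := 2 * t - 1) (by linarith [ht.1]) (by linarith [ht.2])).comp
    t (((hasDerivAt_id t).const_mul 2).sub_const 1)
  have hpos : 0 < √(t * (1 - t)) := Real.sqrt_pos.2 (mul_pos ht.1 (by linarith [ht.2]))
  rwa [hsqrt, show 1 / (2 * √(t * (1 - t))) * (2 * 1) = 1 / √(t * (1 - t)) by field_simp] at h

/-- Comparison with the primitive `c / 2 * arcsin (2 t - 1)` of `c / (2 √(t (1 - t)))`. -/
lemma integral_le_pi_div_two_mul_of_mul_sqrt_le {g : ℝ → ℝ} {c : ℝ}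
    (hg : ContinuousOn g (Icc 0 1)) (hbound : ∀ t ∈ Ioo (0 : ℝ) 1, 2 * √(t * (1 - t)) * g t ≤ c) :
    ∫ t in (0 : ℝ)..1, g t ≤ π / 2 * c := by
  have hG := intervalIntegral.integral_le_sub_of_hasDeriv_right_of_le zero_le_one
    (g := fun t => c / 2 * Real.arcsin (2 * t - 1)) (g' := fun t => c / 2 * (1 / √(t * (1 - t))))
    (by fun_prop)
    (fun t ht => ((hasDerivAt_arcsin_two_mul_sub_one ht).const_mul (c / 2)).hasDerivWithinAt)
    (hg.integrableOn_compact isCompact_Icc)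
    (fun t ht => by
      have hpos : 0 < √(t * (1 - t)) := Real.sqrt_pos.2 (mul_pos ht.1 (by linarith [ht.2]))
      rw [← div_eq_mul_one_div, div_div, le_div_iff₀ (by positivity), mul_comm]
      exact hbound t ht)
  norm_num at hG
  linarith

lemma two_mul_sqrt_mul_le_one_sub_norm_add_smul_sub_sq {E : Type*} [NormedAddCommGroup E]
    [NormedSpace ℝ E] {z w : E} (hz : ‖z‖ ≤ 1) (hw : ‖w‖ ≤ 1) {t : ℝ} (ht : t ∈ Icc 0 1) :
    2 * √(t * (1 - t)) * (√(1 - ‖z‖ ^ 2) * √(1 - ‖w‖ ^ 2)) ≤ 1 - ‖z + t • (w - z)‖ ^ 2 := by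
  obtain ⟨ht₀, ht₁⟩ := ht
  have hnorm : ‖z + t • (w - z)‖ ≤ (1 - t) * ‖z‖ + t * ‖w‖ := by
    rw [show z + t • (w - z) = (1 - t) • z + t • w by module]
    refine (norm_add_le _ _).trans_eq ?_
    rw [norm_smul, norm_smul, Real.norm_of_nonneg ht₀, Real.norm_of_nonneg (by linarith)]
  set a := 1 - ‖z‖ ^ 2
  set b := 1 - ‖w‖ ^ 2
  have ha : 0 ≤ a := by nlinarith [norm_nonneg z]
  have hb : 0 ≤ b := by nlinarith [norm_nonneg w]
  have hconvex : (1 - t) * a + t * b ≤ 1 - ‖z + t • (w - z)‖ ^ 2 := by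
    nlinarith [norm_nonneg (z + t • (w - z)), norm_nonneg z, norm_nonneg w,
      mul_nonneg (mul_nonneg ht₀ (sub_nonneg.2 ht₁)) (sq_nonneg (‖z‖ - ‖w‖))]
  have hsplit : √(t * (1 - t)) * (√a * √b) = √((1 - t) * a) * √(t * b) := by
    rw [Real.sqrt_mul ht₀, Real.sqrt_mul (sub_nonneg.2 ht₁), Real.sqrt_mul ht₀]
    ring
  have hamgm : 2 * (√((1 - t) * a) * √(t * b)) ≤ (1 - t) * a + t * b := by
    nlinarith [Real.sq_sqrt (mul_nonneg (sub_nonneg.2 ht₁) ha), Real.sq_sqrt (mul_nonneg ht₀ hb),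
      sq_nonneg (√((1 - t) * a) - √(t * b))]
  rw [mul_assoc, hsplit]
  exact hamgm.trans hconvex

section Segment

variable {E F : Type*} [NormedAddCommGroup E] [NormedSpace ℝ E] [NormedAddCommGroup F]
  [NormedSpace ℝ F] {f : E → F} {s : Set E} {z w : E}

lemma continuousOn_fderiv_add_smul_sub_apply (hs : IsOpen s) (hconv : Convex ℝ s)
    (hf : ContDiffOn ℝ 1 f s) (hz : z ∈ s) (hw : w ∈ s) :
    ContinuousOn (fun t : ℝ => fderiv ℝ f (z + t • (w - z)) (w - z)) (Icc 0 1) :=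
  ((hf.continuousOn_fderiv_of_isOpen hs le_rfl).comp (by fun_prop)
    (fun _ ht => hconv.add_smul_sub_mem hz hw ht)).clm_apply continuousOn_const

lemma integral_fderiv_add_smul_sub_apply [CompleteSpace F] (hs : IsOpen s) (hconv : Convex ℝ s)
    (hf : ContDiffOn ℝ 1 f s) (hz : z ∈ s) (hw : w ∈ s) :
    ∫ t in (0 : ℝ)..1, fderiv ℝ f (z + t • (w - z)) (w - z) = f w - f z := by
  have hderiv : ∀ t ∈ uIcc (0 : ℝ) 1,
      HasDerivAt (fun t : ℝ => f (z + t • (w - z))) (fderiv ℝ f (z + t • (w - z)) (w - z)) t := by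
    intro t ht
    rw [uIcc_of_le zero_le_one] at ht
    have hmem := hconv.add_smul_sub_mem hz hw ht
    have hline : HasDerivAt (fun t : ℝ => z + t • (w - z)) (w - z) t := by
      simpa using ((hasDerivAt_id t).smul_const (w - z)).const_add z
    exact ((hf.differentiableOn one_ne_zero).differentiableAt (hs.mem_nhds hmem)).hasFDerivAt
      |>.comp_hasDerivAt t hline
  rw [intervalIntegral.integral_eq_sub_of_hasDerivAt hderiv
    ((continuousOn_fderiv_add_smul_sub_apply hs hconv hf hz hw).intervalIntegrable_of_Icc
      zero_le_one)]
  simp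

end Segment

theorem sqrt_mul_sqrt_mul_norm_sub_le_of_one_sub_norm_sq_mul_norm_fderiv_le {E F : Type*}
    [NormedAddCommGroup E] [NormedSpace ℝ E] [NormedAddCommGroup F] [NormedSpace ℝ F]
    [CompleteSpace F] {f : E → F} {M : ℝ} (hf : ContDiffOn ℝ 1 f (ball 0 1))
    (hM : ∀ x ∈ ball (0 : E) 1, (1 - ‖x‖ ^ 2) * ‖fderiv ℝ f x‖ ≤ M) {z w : E}
    (hz : z ∈ ball (0 : E) 1) (hw : w ∈ ball (0 : E) 1) :
    √(1 - ‖z‖ ^ 2) * √(1 - ‖w‖ ^ 2) * ‖f z - f w‖ ≤ π / 2 * M * ‖z - w‖ := by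
  set D := fun t : ℝ => fderiv ℝ f (z + t • (w - z)) (w - z)
  have hD := continuousOn_fderiv_add_smul_sub_apply isOpen_ball (convex_ball 0 1) hf hz hw
  have hz₁ : ‖z‖ ≤ 1 := (mem_ball_zero_iff.1 hz).le
  have hw₁ : ‖w‖ ≤ 1 := (mem_ball_zero_iff.1 hw).le
  have hbound : ∀ t ∈ Ioo (0 : ℝ) 1,
      2 * √(t * (1 - t)) * (√(1 - ‖z‖ ^ 2) * √(1 - ‖w‖ ^ 2) * ‖D t‖) ≤ M * ‖w - z‖ := by
    intro t ht
    have hmem := (convex_ball (0 : E) 1).add_smul_sub_mem hz hw (Ioo_subset_Icc_self ht)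
    calc 2 * √(t * (1 - t)) * (√(1 - ‖z‖ ^ 2) * √(1 - ‖w‖ ^ 2) * ‖D t‖)
        = 2 * √(t * (1 - t)) * (√(1 - ‖z‖ ^ 2) * √(1 - ‖w‖ ^ 2)) * ‖D t‖ := by ring
      _ ≤ (1 - ‖z + t • (w - z)‖ ^ 2) * (‖fderiv ℝ f (z + t • (w - z))‖ * ‖w - z‖) :=
          mul_le_mul (two_mul_sqrt_mul_le_one_sub_norm_add_smul_sub_sq hz₁ hw₁
            (Ioo_subset_Icc_self ht)) (ContinuousLinearMap.le_opNorm _ _) (norm_nonneg _)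
            (by nlinarith [mem_ball_zero_iff.1 hmem, norm_nonneg (z + t • (w - z))])
      _ ≤ M * ‖w - z‖ := by
          rw [← mul_assoc]
          exact mul_le_mul_of_nonneg_right (hM _ hmem) (norm_nonneg _)
  calc √(1 - ‖z‖ ^ 2) * √(1 - ‖w‖ ^ 2) * ‖f z - f w‖
      = √(1 - ‖z‖ ^ 2) * √(1 - ‖w‖ ^ 2) * ‖∫ t in (0 : ℝ)..1, D t‖ := by
        rw [integral_fderiv_add_smul_sub_apply isOpen_ball (convex_ball 0 1) hf hz hw,
          norm_sub_rev]
    _ ≤ ∫ t in (0 : ℝ)..1, √(1 - ‖z‖ ^ 2) * √(1 - ‖w‖ ^ 2) * ‖D t‖ := by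
        rw [intervalIntegral.integral_const_mul]
        gcongr
        exact intervalIntegral.norm_integral_le_integral_norm zero_le_one
    _ ≤ π / 2 * (M * ‖w - z‖) :=
        integral_le_pi_div_two_mul_of_mul_sqrt_le (continuousOn_const.mul hD.norm) hbound
    _ = π / 2 * M * ‖z - w‖ := by rw [norm_sub_rev, mul_assoc]

section Wirtinger

variable {n : ℕ}

lemma fderiv_apply_eq_sum_wdz_add_wdzbar (f : Cn n → ℂ) (x v : Cn n) :
    fderiv ℝ f x v = ∑ k, (wdz n f x k * v k + wdzbar n f x k * conj (v k)) := by
  have hv : v = ∑ k, ((v k).re • EuclideanSpace.single k (1 : ℂ) +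
      (v k).im • EuclideanSpace.single k I) := by
    ext j
    simp [Complex.ext_iff, Pi.single_apply, apply_ite Complex.re, apply_ite Complex.im]
  conv_lhs => rw [hv]
  simp only [map_sum, map_add, map_smul, wdz, wdzbar, real_smul]
  refine Finset.sum_congr rfl fun k _ => ?_
  conv_rhs => rw [← re_add_im (v k)]
  simp only [map_add, map_mul, conj_ofReal, conj_I]
  ring_nf
  rw [I_sq]
  ring

lemma sum_norm_mul_le_euclNorm_mul_norm (a : Fin n → ℂ) (v : Cn n) :
    ∑ k, ‖a k‖ * ‖v k‖ ≤ euclNorm n a * ‖v‖ := by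
  simp only [euclNorm, Complex.normSq_eq_norm_sq]
  rw [EuclideanSpace.norm_eq, ← Real.sqrt_mul (by positivity),
    Real.le_sqrt (by positivity) (by positivity)]
  exact Finset.sum_mul_sq_le_sq_mul_sq Finset.univ _ _

lemma norm_fderiv_le_euclNorm_wdz_add_euclNorm_wdzbar (f : Cn n → ℂ) (x : Cn n) :
    ‖fderiv ℝ f x‖ ≤ euclNorm n (wdz n f x) + euclNorm n (wdzbar n f x) := by
  refine ContinuousLinearMap.opNorm_le_bound _
    (add_nonneg (Real.sqrt_nonneg _) (Real.sqrt_nonneg _)) fun v => ?_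
  rw [fderiv_apply_eq_sum_wdz_add_wdzbar]
  calc ‖∑ k, (wdz n f x k * v k + wdzbar n f x k * conj (v k))‖
      ≤ ∑ k, ‖wdz n f x k‖ * ‖v k‖ + ∑ k, ‖wdzbar n f x k‖ * ‖v k‖ := by
        rw [← Finset.sum_add_distrib]
        refine (norm_sum_le _ _).trans (Finset.sum_le_sum fun k _ => ?_)
        refine (norm_add_le _ _).trans_eq ?_
        rw [norm_mul, norm_mul, RCLike.norm_conj]
    _ ≤ euclNorm n (wdz n f x) * ‖v‖ + euclNorm n (wdzbar n f x) * ‖v‖ :=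
        add_le_add (sum_norm_mul_le_euclNorm_mul_norm _ _)
          (sum_norm_mul_le_euclNorm_mul_norm _ _)
    _ = _ := by ring

lemma one_sub_norm_sq_mul_norm_fderiv_le_hbNorm {f : Cn n → ℂ}
    (hfin : BddAbove (Set.range fun z : ball (0 : Cn n) 1 => hbExpr n f z)) {x : Cn n}
    (hx : x ∈ ball (0 : Cn n) 1) : (1 - ‖x‖ ^ 2) * ‖fderiv ℝ f x‖ ≤ hbNorm n f := by
  have hx₁ : 0 ≤ 1 - ‖x‖ ^ 2 := by nlinarith [mem_ball_zero_iff.1 hx, norm_nonneg x]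
  calc (1 - ‖x‖ ^ 2) * ‖fderiv ℝ f x‖ ≤ hbExpr n f x :=
        mul_le_mul_of_nonneg_left (norm_fderiv_le_euclNorm_wdz_add_euclNorm_wdzbar f x) hx₁
    _ ≤ hbNorm n f := le_ciSup hfin (⟨x, hx⟩ : ball (0 : Cn n) 1)

end Wirtinger

/-- If `f` is `h`-harmonic on the unit ball of `ℂⁿ` with finite Bloch norm,
then for all distinct `z, w` in the ball, `L_f(z,w) ≤ π √n ‖f‖_HB`. -/
theorem weightedLip_le_pi_sqrt_mul_hbNorm (n : ℕ) (hn : 1 ≤ n) (f : Cn n → ℂ)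
    (hf : IsHHarmonic n f)
    (hfin : BddAbove (Set.range fun z : ball (0 : Cn n) 1 => hbExpr n f z))
    (z w : Cn n) (hz : z ∈ ball (0 : Cn n) 1) (hw : w ∈ ball (0 : Cn n) 1) (hzw : z ≠ w) :
    weightedLip n f z w ≤ Real.pi * Real.sqrt n * hbNorm n f := by
  have hM : 0 ≤ hbNorm n f := by
    refine (norm_nonneg (fderiv ℝ f 0)).trans ?_
    simpa using one_sub_norm_sq_mul_norm_fderiv_le_hbNorm hfin (mem_ball_self one_pos)
  have hsqrt_n : 1 ≤ √(n : ℝ) := Real.one_le_sqrt.2 (by exact_mod_cast hn)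
  have hzw' : 0 < ‖z - w‖ := norm_pos_iff.2 (sub_ne_zero.2 hzw)
  rw [weightedLip, div_le_iff₀ hzw']
  calc √(1 - ‖z‖ ^ 2) * √(1 - ‖w‖ ^ 2) * ‖f z - f w‖ ≤ π / 2 * hbNorm n f * ‖z - w‖ :=
        sqrt_mul_sqrt_mul_norm_sub_le_of_one_sub_norm_sq_mul_norm_fderiv_le (hf.1.of_le one_le_two)
          (fun x hx => one_sub_norm_sq_mul_norm_fderiv_le_hbNorm hfin hx) hz hw
    _ ≤ π * √n * hbNorm n f * ‖z - w‖ := by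
        gcongr
        nlinarith [Real.pi_pos]
end
end

section
/- Let f : B^n → C be hyperbolic-harmonic on the unit ball B^n of C^n and suppose sup_{z,w∈B^n, z≠w} L_f(z, w) < ∞, where L_f(z, w) = (1−|z|²)^{1/2}(1−|w|²)^{1/2}|f(z) − f(w)|/|z − w|. Then f belongs to the h-harmonic Bloch space, i.e. ‖f‖_HB = sup_{z∈B^n} (1−|z|²)(|∇̂f(z)| + |∇̂f̄(z)|) < ∞. -/
open MeasureTheory Metric Complex

noncomputable section

/-!
Letting `w → z` in `L_f(z, w) ≤ C` bounds the real derivative: `(1 - |z|²) ‖Df(z)‖ ≤ C`.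
Each Wirtinger derivative `∂f/∂z_k`, `∂f/∂z̄_k` is half a combination of the two directional
derivatives of `f` along `e_k` and `i e_k`, hence at most `‖Df(z)‖`; so
`(1 - |z|²)(|∇̂f(z)| + |∇̂f̄(z)|) ≤ 2 √n C`.
-/

open Filter Topology Set

lemma one_sub_norm_sq_pos_of_mem_ball {E : Type*} [NormedAddCommGroup E] {z : E}
    (hz : z ∈ ball (0 : E) 1) : 0 < 1 - ‖z‖ ^ 2 := by
  have := mem_ball_zero_iff.mp hz
  nlinarith [norm_nonneg z]

section WeightedLipschitz

variable {E F : Type*} [NormedAddCommGroup E] [NormedSpace ℝ E]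
  [NormedAddCommGroup F] [NormedSpace ℝ F]

/- Near `z` the weight `√(1 - ‖w‖²)` is at least `t √(1 - ‖z‖²)` for any `t < 1`, which makes
`f` Lipschitz at `z` with constant `C / (t (1 - ‖z‖²))`; then let `t → 1`. -/
theorem one_sub_norm_sq_mul_norm_fderiv_le {f : E → F} {C : ℝ} (hC : 0 ≤ C) {z : E}
    (hz : z ∈ ball (0 : E) 1)
    (hf : ∀ w ∈ ball (0 : E) 1,
      √(1 - ‖z‖ ^ 2) * √(1 - ‖w‖ ^ 2) * ‖f z - f w‖ ≤ C * ‖z - w‖) :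
    (1 - ‖z‖ ^ 2) * ‖fderiv ℝ f z‖ ≤ C := by
  set r := 1 - ‖z‖ ^ 2
  have hr : 0 < r := one_sub_norm_sq_pos_of_mem_ball hz
  have hscaled : ∀ t ∈ Ioo (0 : ℝ) 1, t * (r * ‖fderiv ℝ f z‖) ≤ C := by
    rintro t ⟨ht0, ht1⟩
    have hweight_cont : Continuous fun w : E => 1 - ‖w‖ ^ 2 := by fun_prop
    have hnear : ∀ᶠ w in 𝓝 z, t ^ 2 * r < 1 - ‖w‖ ^ 2 :=
      hweight_cont.continuousAt.eventually
        (lt_mem_nhds (show t ^ 2 * r < r by nlinarith [mul_pos ht0 hr]))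
    have hlip : ∀ᶠ w in 𝓝 z, ‖f w - f z‖ ≤ C / (t * r) * ‖w - z‖ := by
      filter_upwards [hnear] with w hw
      have hw_ball : w ∈ ball (0 : E) 1 := by
        rw [mem_ball_zero_iff]
        nlinarith [norm_nonneg w, sq_nonneg t]
      have hweight : t * r ≤ √r * √(1 - ‖w‖ ^ 2) := calc
        t * r = √r * √(t ^ 2 * r) := by
          rw [Real.sqrt_mul (sq_nonneg t), Real.sqrt_sq ht0.le,
            mul_left_comm, Real.mul_self_sqrt hr.le]
        _ ≤ √r * √(1 - ‖w‖ ^ 2) := by gcongr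
      rw [div_mul_eq_mul_div, le_div_iff₀ (by positivity), mul_comm]
      exact (mul_le_mul_of_nonneg_right hweight (norm_nonneg _)).trans
        (by simpa only [norm_sub_rev] using hf w hw_ball)
    have := norm_fderiv_le_of_lip' ℝ (by positivity) hlip
    rw [le_div_iff₀ (by positivity)] at this
    linarith
  have hlim : Tendsto (fun t : ℝ => t * (r * ‖fderiv ℝ f z‖)) (𝓝[<] 1)
      (𝓝 (r * ‖fderiv ℝ f z‖)) := by
    simpa using ((continuous_mul_const (r * ‖fderiv ℝ f z‖)).tendsto 1).mono_left
      nhdsWithin_le_nhds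
  exact le_of_tendsto hlim <| eventually_of_mem (Ioo_mem_nhdsLT zero_lt_one) hscaled

end WeightedLipschitz

lemma mul_norm_sub_le_of_weightedLip_le {n : ℕ} {f : Cn n → ℂ} {z w : Cn n} {C : ℝ}
    (h : z ≠ w → weightedLip n f z w ≤ C) :
    √(1 - ‖z‖ ^ 2) * √(1 - ‖w‖ ^ 2) * ‖f z - f w‖ ≤ C * ‖z - w‖ := by
  rcases eq_or_ne z w with rfl | hzw
  · simp
  · rw [← div_le_iff₀ (norm_pos_iff.2 (sub_ne_zero.2 hzw))]
    exact h hzw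

section Wirtinger

variable {n : ℕ}

lemma norm_half_mul_sub_I_mul_le (a b : ℂ) : ‖(1 / 2 : ℂ) * (a - I * b)‖ ≤ (‖a‖ + ‖b‖) / 2 := by
  calc ‖(1 / 2 : ℂ) * (a - I * b)‖ = ‖a - I * b‖ / 2 := by simp [div_eq_inv_mul]
    _ ≤ (‖a‖ + ‖b‖) / 2 := by gcongr; simpa using norm_sub_le a (I * b)

lemma norm_half_mul_add_I_mul_le (a b : ℂ) : ‖(1 / 2 : ℂ) * (a + I * b)‖ ≤ (‖a‖ + ‖b‖) / 2 := by
  simpa using norm_half_mul_sub_I_mul_le a (-b)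

lemma norm_apply_single_le {ι F : Type*} [Fintype ι] [DecidableEq ι] [NormedAddCommGroup F]
    [NormedSpace ℝ F] (L : EuclideanSpace ℂ ι →L[ℝ] F) (k : ι) {c : ℂ} (hc : ‖c‖ = 1) :
    ‖L (EuclideanSpace.single k c)‖ ≤ ‖L‖ := by
  simpa [hc] using L.le_opNorm (EuclideanSpace.single k c)

lemma norm_wdz_le (f : Cn n → ℂ) (z : Cn n) (k : Fin n) : ‖wdz n f z k‖ ≤ ‖fderiv ℝ f z‖ := by
  have h1 := norm_apply_single_le (fderiv ℝ f z) k norm_one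
  have hI := norm_apply_single_le (fderiv ℝ f z) k norm_I
  exact (norm_half_mul_sub_I_mul_le _ _).trans (by linarith)

lemma norm_wdzbar_le (f : Cn n → ℂ) (z : Cn n) (k : Fin n) :
    ‖wdzbar n f z k‖ ≤ ‖fderiv ℝ f z‖ := by
  have h1 := norm_apply_single_le (fderiv ℝ f z) k norm_one
  have hI := norm_apply_single_le (fderiv ℝ f z) k norm_I
  exact (norm_half_mul_add_I_mul_le _ _).trans (by linarith)

lemma euclNorm_le_sqrt_mul {v : Fin n → ℂ} {M : ℝ} (hM : 0 ≤ M) (hv : ∀ k, ‖v k‖ ≤ M) :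
    euclNorm n v ≤ √n * M := by
  have hsq : ∀ k, normSq (v k) ≤ M ^ 2 := fun k => by
    rw [normSq_eq_norm_sq]
    exact pow_le_pow_left₀ (norm_nonneg _) (hv k) 2
  calc euclNorm n v ≤ √(∑ _k : Fin n, M ^ 2) :=
        Real.sqrt_le_sqrt (Finset.sum_le_sum fun k _ => hsq k)
    _ = √n * M := by
      rw [Finset.sum_const, Finset.card_univ, Fintype.card_fin, nsmul_eq_mul,
        Real.sqrt_mul n.cast_nonneg, Real.sqrt_sq hM]

lemma hbExpr_le (f : Cn n → ℂ) {z : Cn n} (hz : z ∈ ball (0 : Cn n) 1) :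
    hbExpr n f z ≤ 2 * √n * ((1 - ‖z‖ ^ 2) * ‖fderiv ℝ f z‖) := by
  have hr := (one_sub_norm_sq_pos_of_mem_ball hz).le
  have hwdz := euclNorm_le_sqrt_mul (norm_nonneg _) (norm_wdz_le f z)
  have hwdzbar := euclNorm_le_sqrt_mul (norm_nonneg _) (norm_wdzbar_le f z)
  calc hbExpr n f z ≤ (1 - ‖z‖ ^ 2) * (√n * ‖fderiv ℝ f z‖ + √n * ‖fderiv ℝ f z‖) :=
        mul_le_mul_of_nonneg_left (add_le_add hwdz hwdzbar) hr
    _ = 2 * √n * ((1 - ‖z‖ ^ 2) * ‖fderiv ℝ f z‖) := by ring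

end Wirtinger

theorem hbNorm_finite_of_weightedLip_bounded_general (n : ℕ) (f : Cn n → ℂ)
    (hlip : ∃ C : ℝ, ∀ z ∈ ball (0 : Cn n) 1, ∀ w ∈ ball (0 : Cn n) 1,
      z ≠ w → weightedLip n f z w ≤ C) :
    ∃ C : ℝ, ∀ z ∈ ball (0 : Cn n) 1, hbExpr n f z ≤ C := by
  obtain ⟨C, hC⟩ := hlip
  refine ⟨2 * √n * max C 0, fun z hz => (hbExpr_le f hz).trans ?_⟩
  have hderiv := one_sub_norm_sq_mul_norm_fderiv_le (le_max_right C 0) hz fun w hw =>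
    mul_norm_sub_le_of_weightedLip_le fun hzw => (hC z hz w hw hzw).trans (le_max_left C 0)
  gcongr

/-- If `f` is `h`-harmonic on the unit ball of `ℂⁿ` and the weighted Lipschitz
function `L_f` is bounded over pairs of distinct points, then `f` is in the `h`-harmonic
Bloch space, i.e. `sup_{z∈Bⁿ} (1−|z|²)(|∇̂f(z)| + |∇̂f̄(z)|) < ∞`. -/
theorem hbNorm_finite_of_weightedLip_bounded (n : ℕ) (hn : 1 ≤ n) (f : Cn n → ℂ)
    (hf : IsHHarmonic n f)
    (hlip : ∃ C : ℝ, ∀ z ∈ ball (0 : Cn n) 1, ∀ w ∈ ball (0 : Cn n) 1,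
      z ≠ w → weightedLip n f z w ≤ C) :
    ∃ C : ℝ, ∀ z ∈ ball (0 : Cn n) 1, hbExpr n f z ≤ C :=
  hbNorm_finite_of_weightedLip_bounded_general n f hlip
end
end

section
/- A hyperbolic-harmonic function f : B^n → C belongs to the h-harmonic Bloch space (i.e. ‖f‖_HB = sup_{z∈B^n} (1−|z|²)(|∇̂f(z)| + |∇̂f̄(z)|) < ∞) if and only if sup_{z,w∈B^n, z≠w} L_f(z, w) < ∞, where L_f(z, w) = (1−|z|²)^{1/2}(1−|w|²)^{1/2}|f(z) − f(w)|/|z − w|. -/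
open MeasureTheory Metric Complex

noncomputable section

/-! The real derivative `Df(z)` and the Wirtinger gradients satisfy
`‖Df(z)‖ ≤ |∇̂f(z)| + |∇̂f̄(z)| ≤ 2‖Df(z)‖`, so both conditions can be read off `Df`.

If `(1-|x|²)‖Df(x)‖ ≤ C` on the ball, integrate `Df` along the segment `γ` from `z` to `w`.
Since `x ↦ √(1-|x|²)` is concave, `1-|γ(t)|² ≥ ℓ(t)²` for the affine interpolation `ℓ` between
`√(1-|z|²)` and `√(1-|w|²)`, and `∫₀¹ ℓ⁻² = 1/(ℓ(0) ℓ(1))`; this is exactly `L_f(z,w) ≤ C`.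
Conversely, letting `w → z` in `L_f(z,w) ≤ C` bounds `(1-|z|²)‖Df(z)‖` by `C`. -/

open ComplexConjugate Set Topology

section Wirtinger

variable {n : ℕ}

lemma sum_mul_eq_inner (A : Fin n → ℂ) (v : Cn n) :
    ∑ k, A k * v k = inner ℂ (WithLp.toLp 2 (fun k => conj (A k)) : Cn n) v := by
  simp [PiLp.inner_apply, RCLike.inner_apply, mul_comm]

lemma euclNorm_eq_norm_toLp_conj (A : Fin n → ℂ) :
    euclNorm n A = ‖(WithLp.toLp 2 (fun k => conj (A k)) : Cn n)‖ := by
  simp [euclNorm, EuclideanSpace.norm_eq, Complex.normSq_eq_norm_sq]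

lemma euclNorm_conj (A : Fin n → ℂ) : euclNorm n (fun k => conj (A k)) = euclNorm n A := by
  simp [euclNorm]

lemma norm_sum_mul_le (A : Fin n → ℂ) (v : Cn n) :
    ‖∑ k, A k * v k‖ ≤ euclNorm n A * ‖v‖ := by
  rw [sum_mul_eq_inner, euclNorm_eq_norm_toLp_conj]
  exact norm_inner_le_norm _ _

lemma euclNorm_le_of_norm_sum_mul_le {A : Fin n → ℂ} {K : ℝ} (hK : 0 ≤ K)
    (h : ∀ v : Cn n, ‖∑ k, A k * v k‖ ≤ K * ‖v‖) : euclNorm n A ≤ K := by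
  rw [euclNorm_eq_norm_toLp_conj, ← innerSL_apply_norm ℂ]
  exact ContinuousLinearMap.opNorm_le_bound _ hK fun v => by simpa [sum_mul_eq_inner] using h v

lemma sum_mul_conj_eq_conj_sum (A : Fin n → ℂ) (v : Cn n) :
    ∑ k, A k * conj (v k) = conj (∑ k, conj (A k) * v k) := by
  simp

lemma eq_sum_re_smul_single_add_im_smul_single (v : Cn n) :
    v = ∑ k, ((v k).re • EuclideanSpace.single k (1 : ℂ) +
      (v k).im • EuclideanSpace.single k I) := by
  ext j
  simp [Complex.real_smul, Pi.single_apply, Finset.sum_add_distrib, Complex.re_add_im]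

variable (f : Cn n → ℂ) (z : Cn n)

lemma fderiv_apply_eq_sum_wirtinger (v : Cn n) :
    fderiv ℝ f z v = ∑ k, wdz n f z k * v k + ∑ k, wdzbar n f z k * conj (v k) := by
  conv_lhs => rw [eq_sum_re_smul_single_add_im_smul_single v]
  rw [map_sum, ← Finset.sum_add_distrib]
  refine Finset.sum_congr rfl fun k _ => ?_
  rw [map_add, map_smul, map_smul, wdz, wdzbar]
  conv_rhs => rw [← Complex.re_add_im (v k)]
  simp only [Complex.real_smul, map_add, map_mul, Complex.conj_ofReal, Complex.conj_I]
  linear_combination (fderiv ℝ f z (EuclideanSpace.single k I) * (v k).im) * Complex.I_sq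

lemma fderiv_apply_I_smul (v : Cn n) :
    fderiv ℝ f z (I • v) = I * ∑ k, wdz n f z k * v k - I * ∑ k, wdzbar n f z k * conj (v k) := by
  rw [fderiv_apply_eq_sum_wirtinger, Finset.mul_sum, Finset.mul_sum, ← Finset.sum_sub_distrib,
    ← Finset.sum_add_distrib]
  refine Finset.sum_congr rfl fun k _ => ?_
  simp only [PiLp.smul_apply, smul_eq_mul, map_mul, Complex.conj_I]
  ring

lemma sum_wdz_mul_eq (v : Cn n) :
    ∑ k, wdz n f z k * v k = (fderiv ℝ f z v - I * fderiv ℝ f z (I • v)) / 2 := by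
  rw [fderiv_apply_I_smul, fderiv_apply_eq_sum_wirtinger]
  linear_combination
    ((∑ k, wdz n f z k * v k) - ∑ k, wdzbar n f z k * conj (v k)) / 2 * Complex.I_sq

lemma sum_wdzbar_mul_conj_eq (v : Cn n) :
    ∑ k, wdzbar n f z k * conj (v k) = (fderiv ℝ f z v + I * fderiv ℝ f z (I • v)) / 2 := by
  rw [fderiv_apply_I_smul, fderiv_apply_eq_sum_wirtinger]
  linear_combination
    ((∑ k, wdzbar n f z k * conj (v k)) - ∑ k, wdz n f z k * v k) / 2 * Complex.I_sq

lemma norm_fderiv_le_euclNorm_wdz_add_wdzbar :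
    ‖fderiv ℝ f z‖ ≤ euclNorm n (wdz n f z) + euclNorm n (wdzbar n f z) := by
  refine ContinuousLinearMap.opNorm_le_bound _
    (add_nonneg (Real.sqrt_nonneg _) (Real.sqrt_nonneg _)) fun v => ?_
  rw [fderiv_apply_eq_sum_wirtinger, sum_mul_conj_eq_conj_sum, add_mul]
  refine (norm_add_le _ _).trans (add_le_add (norm_sum_mul_le _ v) ?_)
  rw [Complex.norm_conj, ← euclNorm_conj (wdzbar n f z)]
  exact norm_sum_mul_le _ v

lemma euclNorm_wdz_add_wdzbar_le :
    euclNorm n (wdz n f z) + euclNorm n (wdzbar n f z) ≤ 2 * ‖fderiv ℝ f z‖ := by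
  have half_le : ∀ v : Cn n, ∀ s : ℂ, ‖s‖ = 1 →
      ‖(fderiv ℝ f z v + s * fderiv ℝ f z (I • v)) / 2‖ ≤ ‖fderiv ℝ f z‖ * ‖v‖ := by
    intro v s hs
    have h1 := (fderiv ℝ f z).le_opNorm v
    have h2 := (fderiv ℝ f z).le_opNorm (I • v)
    rw [norm_smul, Complex.norm_I, one_mul] at h2
    rw [norm_div, RCLike.norm_ofNat, div_le_iff₀ two_pos]
    calc _ ≤ ‖fderiv ℝ f z v‖ + ‖s * fderiv ℝ f z (I • v)‖ := norm_add_le _ _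
      _ ≤ _ := by rw [norm_mul, hs, one_mul]; linarith
  have h0 := norm_nonneg (fderiv ℝ f z)
  have hA : euclNorm n (wdz n f z) ≤ ‖fderiv ℝ f z‖ :=
    euclNorm_le_of_norm_sum_mul_le h0 fun v => by
      simpa [sum_wdz_mul_eq, sub_eq_add_neg] using half_le v (-I) (by simp)
  have hB : euclNorm n (wdzbar n f z) ≤ ‖fderiv ℝ f z‖ := by
    rw [← euclNorm_conj]
    refine euclNorm_le_of_norm_sum_mul_le h0 fun v => ?_
    rw [← Complex.norm_conj, ← sum_mul_conj_eq_conj_sum, sum_wdzbar_mul_conj_eq]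
    exact half_le v I (by simp)
  linarith

end Wirtinger

lemma concaveOn_sqrt_one_sub_norm_sq {E : Type*} [SeminormedAddCommGroup E] [NormedSpace ℝ E] :
    ConcaveOn ℝ (closedBall (0 : E) 1) fun x => √(1 - ‖x‖ ^ 2) := by
  refine ⟨convex_closedBall 0 1, fun z hz w hw s t hs ht hst => ?_⟩
  rw [mem_closedBall_zero_iff] at hz hw
  simp only [smul_eq_mul]
  have hp := Real.sq_sqrt (show 0 ≤ 1 - ‖z‖ ^ 2 by nlinarith [norm_nonneg z])
  have hq := Real.sq_sqrt (show 0 ≤ 1 - ‖w‖ ^ 2 by nlinarith [norm_nonneg w])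
  set p := √(1 - ‖z‖ ^ 2)
  set q := √(1 - ‖w‖ ^ 2)
  have htri : ‖s • z + t • w‖ ≤ s * ‖z‖ + t * ‖w‖ := by
    refine (norm_add_le _ _).trans ?_
    rw [norm_smul, norm_smul, Real.norm_of_nonneg hs, Real.norm_of_nonneg ht]
  -- Cauchy–Schwarz in `ℝ²` for the unit vectors `(‖z‖, p)` and `(‖w‖, q)`.
  have hcs : ‖z‖ * ‖w‖ + p * q ≤ 1 := by
    nlinarith [sq_nonneg (‖z‖ * q - p * ‖w‖), sq_nonneg (‖z‖ * ‖w‖ + p * q - 1)]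
  have hsum : (s * ‖z‖ + t * ‖w‖) ^ 2 + (s * p + t * q) ^ 2 ≤ 1 := by
    have e : (s * ‖z‖ + t * ‖w‖) ^ 2 + (s * p + t * q) ^ 2
        = (s + t) ^ 2 - 2 * s * t * (1 - (‖z‖ * ‖w‖ + p * q)) := by
      linear_combination s ^ 2 * hp + t ^ 2 * hq
    rw [e, hst]
    nlinarith [mul_nonneg (mul_nonneg hs ht) (sub_nonneg.2 hcs)]
  apply Real.le_sqrt_of_sq_le
  nlinarith [mul_self_le_mul_self (norm_nonneg _) htri]

lemma norm_sub_le_of_norm_deriv_le_div_sq {E : Type*} [NormedAddCommGroup E] [NormedSpace ℝ E]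
    {g g' : ℝ → E} {p q K : ℝ} (hp : 0 < p) (hq : 0 < q)
    (hg : ∀ t ∈ Icc (0 : ℝ) 1, HasDerivAt g (g' t) t)
    (hbound : ∀ t ∈ Ico (0 : ℝ) 1, ‖g' t‖ ≤ K / ((1 - t) * p + t * q) ^ 2) :
    ‖g 1 - g 0‖ ≤ K / (p * q) := by
  have hℓ : ∀ t ∈ Icc (0 : ℝ) 1, 0 < (1 - t) * p + t * q := fun t ht =>
    convex_Ioi (0 : ℝ) hp hq (sub_nonneg.2 ht.2) ht.1 (sub_add_cancel 1 t)
  -- `t / (p * ℓ t)` is a primitive of `1 / ℓ t ^ 2` for the affine `ℓ t = (1 - t) * p + t * q`.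
  have hB : ∀ t ∈ Icc (0 : ℝ) 1, HasDerivAt (fun t => K * t / (p * (p + t * (q - p))))
      (K / ((1 - t) * p + t * q) ^ 2) t := fun t ht => by
    have hℓt : p + t * (q - p) ≠ 0 := by linarith [hℓ t ht]
    refine (((hasDerivAt_id' t).const_mul K).div
      ((((hasDerivAt_id' t).mul_const (q - p)).const_add p).const_mul p)
      (mul_ne_zero hp.ne' hℓt)).congr_deriv ?_
    rw [show (1 - t) * p + t * q = p + t * (q - p) by ring]
    field_simp
    ring
  have key := image_norm_le_of_norm_deriv_right_le_deriv_boundary'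
    (f := fun t => g t - g 0) (f' := g') (a := 0) (b := 1)
    (fun t ht => ((hg t ht).continuousAt.sub continuousAt_const).continuousWithinAt)
    (fun t ht => ((hg t (Ico_subset_Icc_self ht)).sub_const _).hasDerivWithinAt)
    (by simp) (fun t ht => (hB t ht).continuousAt.continuousWithinAt)
    (fun t ht => (hB t (Ico_subset_Icc_self ht)).hasDerivWithinAt) hbound
    (right_mem_Icc.2 zero_le_one)
  simpa [hp.ne', hq.ne', mul_comm] using key

lemma HasFDerivAt.norm_le_of_eventually_norm_sub_le {E F : Type*} [NormedAddCommGroup E]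
    [NormedSpace ℝ E] [NormedAddCommGroup F] [NormedSpace ℝ F] {f : E → F} {f' : E →L[ℝ] F}
    {x₀ : E} (hf : HasFDerivAt f f' x₀) {M : E → ℝ} (hM : ContinuousAt M x₀) (hM₀ : 0 ≤ M x₀)
    (h : ∀ᶠ x in 𝓝 x₀, ‖f x - f x₀‖ ≤ M x * ‖x - x₀‖) : ‖f'‖ ≤ M x₀ := by
  refine le_of_forall_gt_imp_ge_of_dense fun c hc => hf.le_of_lip' (hM₀.trans hc.le) ?_
  filter_upwards [h, hM.eventually (gt_mem_nhds hc)] with x hx hMx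
  exact hx.trans (mul_le_mul_of_nonneg_right hMx.le (norm_nonneg _))

section Ball

variable {n : ℕ}

lemma one_sub_norm_sq_pos {z : Cn n} (hz : z ∈ ball (0 : Cn n) 1) : 0 < 1 - ‖z‖ ^ 2 := by
  rw [mem_ball_zero_iff] at hz
  nlinarith [norm_nonneg z]

variable {f : Cn n → ℂ} {z : Cn n}

lemma hbExpr_nonneg (hz : z ∈ ball (0 : Cn n) 1) : 0 ≤ hbExpr n f z :=
  mul_nonneg (one_sub_norm_sq_pos hz).le (add_nonneg (Real.sqrt_nonneg _) (Real.sqrt_nonneg _))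

lemma one_sub_norm_sq_mul_norm_fderiv_le_hbExpr (hz : z ∈ ball (0 : Cn n) 1) :
    (1 - ‖z‖ ^ 2) * ‖fderiv ℝ f z‖ ≤ hbExpr n f z :=
  mul_le_mul_of_nonneg_left (norm_fderiv_le_euclNorm_wdz_add_wdzbar f z)
    (one_sub_norm_sq_pos hz).le

lemma hbExpr_le_two_mul_one_sub_norm_sq_mul_norm_fderiv (hz : z ∈ ball (0 : Cn n) 1) :
    hbExpr n f z ≤ 2 * ((1 - ‖z‖ ^ 2) * ‖fderiv ℝ f z‖) := by
  rw [mul_left_comm]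
  exact mul_le_mul_of_nonneg_left (euclNorm_wdz_add_wdzbar_le f z) (one_sub_norm_sq_pos hz).le

lemma sqrt_mul_sqrt_mul_norm_sub_le_of_hbExpr_le (hf : DifferentiableOn ℝ f (ball 0 1)) {C : ℝ}
    (hC : ∀ x ∈ ball (0 : Cn n) 1, hbExpr n f x ≤ C) {w : Cn n} (hz : z ∈ ball (0 : Cn n) 1)
    (hw : w ∈ ball (0 : Cn n) 1) :
    √(1 - ‖z‖ ^ 2) * √(1 - ‖w‖ ^ 2) * ‖f z - f w‖ ≤ C * ‖z - w‖ := by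
  have hp := Real.sqrt_pos.2 (one_sub_norm_sq_pos hz)
  have hq := Real.sqrt_pos.2 (one_sub_norm_sq_pos hw)
  set γ : ℝ → Cn n := ⇑(AffineMap.lineMap (k := ℝ) z w)
  have hγ : ∀ t ∈ Icc (0 : ℝ) 1, γ t ∈ ball (0 : Cn n) 1 := fun t ht =>
    (convex_ball 0 1).lineMap_mem hz hw ht
  have hbound : ∀ t ∈ Ico (0 : ℝ) 1, ‖fderiv ℝ f (γ t) (w - z)‖ ≤
      C * ‖w - z‖ / ((1 - t) * √(1 - ‖z‖ ^ 2) + t * √(1 - ‖w‖ ^ 2)) ^ 2 := by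
    intro t ht
    have hγt := hγ t (Ico_subset_Icc_self ht)
    have hℓ : 0 < (1 - t) * √(1 - ‖z‖ ^ 2) + t * √(1 - ‖w‖ ^ 2) :=
      convex_Ioi (0 : ℝ) hp hq (sub_nonneg.2 ht.2.le) ht.1 (sub_add_cancel 1 t)
    have hsq : ((1 - t) * √(1 - ‖z‖ ^ 2) + t * √(1 - ‖w‖ ^ 2)) ^ 2 ≤ 1 - ‖γ t‖ ^ 2 := by
      rw [← Real.sq_sqrt (one_sub_norm_sq_pos hγt).le, show γ t = (1 - t) • z + t • w from
        AffineMap.lineMap_apply_module z w t]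
      exact pow_le_pow_left₀ hℓ.le (concaveOn_sqrt_one_sub_norm_sq.2 (ball_subset_closedBall hz)
        (ball_subset_closedBall hw) (sub_nonneg.2 ht.2.le) ht.1 (sub_add_cancel 1 t)) 2
    rw [le_div_iff₀ (by positivity)]
    calc ‖fderiv ℝ f (γ t) (w - z)‖ * ((1 - t) * √(1 - ‖z‖ ^ 2) + t * √(1 - ‖w‖ ^ 2)) ^ 2
        ≤ ‖fderiv ℝ f (γ t)‖ * ‖w - z‖ * (1 - ‖γ t‖ ^ 2) := by
          gcongr
          exact (fderiv ℝ f (γ t)).le_opNorm _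
      _ = (1 - ‖γ t‖ ^ 2) * ‖fderiv ℝ f (γ t)‖ * ‖w - z‖ := by ring
      _ ≤ C * ‖w - z‖ := by
          gcongr
          exact (one_sub_norm_sq_mul_norm_fderiv_le_hbExpr hγt).trans (hC _ hγt)
  have key := norm_sub_le_of_norm_deriv_le_div_sq hp hq (g := f ∘ γ) (K := C * ‖w - z‖)
    (fun t ht => (hf.differentiableAt (isOpen_ball.mem_nhds (hγ t ht))).hasFDerivAt.comp_hasDerivAt
      t AffineMap.hasDerivAt_lineMap) hbound
  simp only [Function.comp_apply, γ, AffineMap.lineMap_apply_zero, AffineMap.lineMap_apply_one]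
    at key
  rw [norm_sub_rev, le_div_iff₀ (by positivity), norm_sub_rev w] at key
  linarith

lemma weightedLip_le_of_hbExpr_le (hf : DifferentiableOn ℝ f (ball 0 1)) {C : ℝ}
    (hC : ∀ x ∈ ball (0 : Cn n) 1, hbExpr n f x ≤ C) {w : Cn n} (hz : z ∈ ball (0 : Cn n) 1)
    (hw : w ∈ ball (0 : Cn n) 1) : weightedLip n f z w ≤ C :=
  div_le_of_le_mul₀ (norm_nonneg _) ((hbExpr_nonneg hz).trans (hC z hz))
    (sqrt_mul_sqrt_mul_norm_sub_le_of_hbExpr_le hf hC hz hw)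

lemma hbExpr_le_of_weightedLip_le (hf : DifferentiableOn ℝ f (ball 0 1)) {C : ℝ} (hC₀ : 0 ≤ C)
    (hC : ∀ x ∈ ball (0 : Cn n) 1, ∀ w ∈ ball (0 : Cn n) 1, x ≠ w → weightedLip n f x w ≤ C)
    (hz : z ∈ ball (0 : Cn n) 1) : hbExpr n f z ≤ 2 * C := by
  have ha := one_sub_norm_sq_pos hz
  have hsa := Real.sqrt_pos.2 ha
  have hderiv : ‖fderiv ℝ f z‖ ≤ C / (√(1 - ‖z‖ ^ 2) * √(1 - ‖z‖ ^ 2)) := by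
    refine (hf.differentiableAt (isOpen_ball.mem_nhds hz)).hasFDerivAt
      |>.norm_le_of_eventually_norm_sub_le
        (M := fun x => C / (√(1 - ‖z‖ ^ 2) * √(1 - ‖x‖ ^ 2))) ?_ (by positivity) ?_
    · exact continuousAt_const.div (by fun_prop) (mul_pos hsa hsa).ne'
    · filter_upwards [isOpen_ball.mem_nhds hz] with x hx
      rcases eq_or_ne x z with rfl | hxz
      · simp
      have hb := one_sub_norm_sq_pos hx
      have := hC x hx z hz hxz
      rw [weightedLip, div_le_iff₀ (norm_pos_iff.2 (sub_ne_zero.2 hxz))] at this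
      rw [div_mul_eq_mul_div, le_div_iff₀ (by positivity)]
      linarith
  rw [Real.mul_self_sqrt ha.le, le_div_iff₀ ha, mul_comm] at hderiv
  linarith [hbExpr_le_two_mul_one_sub_norm_sq_mul_norm_fderiv (f := f) hz]

end Ball

theorem hbNorm_finite_iff_weightedLip_bounded_general (n : ℕ) (f : Cn n → ℂ)
    (hf : IsHHarmonic n f) :
    (∃ C : ℝ, ∀ z ∈ ball (0 : Cn n) 1, hbExpr n f z ≤ C) ↔
      (∃ C : ℝ, ∀ z ∈ ball (0 : Cn n) 1, ∀ w ∈ ball (0 : Cn n) 1,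
        z ≠ w → weightedLip n f z w ≤ C) := by
  have hdiff : DifferentiableOn ℝ f (ball 0 1) := hf.1.differentiableOn two_ne_zero
  constructor
  · rintro ⟨C, hC⟩
    exact ⟨C, fun z hz w hw _ => weightedLip_le_of_hbExpr_le hdiff hC hz hw⟩
  · rintro ⟨C, hC⟩
    exact ⟨2 * max C 0, fun z hz => hbExpr_le_of_weightedLip_le hdiff (le_max_right C 0)
      (fun x hx w hw hxw => (hC x hx w hw hxw).trans (le_max_left C 0)) hz⟩

/-- An `h`-harmonic `f : Bⁿ → ℂ` has finite Bloch norm if and only if its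
weighted Lipschitz function is bounded over pairs of distinct points of the ball. -/
theorem hbNorm_finite_iff_weightedLip_bounded (n : ℕ) (hn : 1 ≤ n) (f : Cn n → ℂ)
    (hf : IsHHarmonic n f) :
    (∃ C : ℝ, ∀ z ∈ ball (0 : Cn n) 1, hbExpr n f z ≤ C) ↔
      (∃ C : ℝ, ∀ z ∈ ball (0 : Cn n) 1, ∀ w ∈ ball (0 : Cn n) 1,
        z ≠ w → weightedLip n f z w ≤ C) :=
  hbNorm_finite_iff_weightedLip_bounded_general n f hf
end
end

section
/- Let r ∈ (0,1) and let a be a nonzero point of the unit ball B^n of C^n. Then the Euclidean ball B^n(a, r(1−|a|²)/2) is contained in the pseudo-hyperbolic ball E(a, r) = {z ∈ B^n : |φ_a(z)| < r}. -/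
open MeasureTheory Metric Complex

noncomputable section

/-- The Hermitian inner product of the paper: `⟨z,w⟩ = Σ_k z_k w̄_k`
(conjugate-linear in the second variable). -/
noncomputable def herm (n : ℕ) (z w : Cn n) : ℂ := @inner ℂ _ _ w z

/-- The orthogonal projection `P_a z = a ⟨z,a⟩/⟨a,a⟩` onto the span of `a`. -/
noncomputable def projLine (n : ℕ) (a z : Cn n) : Cn n :=
  (herm n z a / herm n a a) • a

/-- The Möbius transformation
`φ_a(z) = (a − P_a z − (1−|a|²)^{1/2}(z − P_a z))/(1 − ⟨z,a⟩)` of the unit ball of `ℂⁿ`.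
(For `a = 0` this formula evaluates to `φ_0(z) = −z`.) -/
noncomputable def mobius (n : ℕ) (a z : Cn n) : Cn n :=
  (1 - herm n z a)⁻¹ •
    (a - projLine n a z - ((Real.sqrt (1 - ‖a‖ ^ 2) : ℂ)) • (z - projLine n a z))

/-!
Write `z = a + w`. Since `P_a a = a`, the numerator of `φ_a(z)` is `-(P_a w + s (w - P_a w))` with
`s = (1 - |a|²)^{1/2} ≤ 1`, so by Pythagoras its length is at most `|w|`. The denominator is
`1 - ⟨z, a⟩ = (1 - |a|²) - ⟨w, a⟩`, of modulus at least `1 - |a|² - |w|`. Hence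
`|φ_a(z)| ≤ |w| / (1 - |a|² - |w|)`, which is `< r` as soon as `|w| < r (1 - |a|²) / 2`.
-/

section InnerProductSpace

variable {𝕜 E : Type*} [RCLike 𝕜] [NormedAddCommGroup E] [InnerProductSpace 𝕜 E]

open scoped InnerProductSpace

theorem Submodule.norm_starProjection_add_smul_orthogonal_le (K : Submodule 𝕜 E)
    [K.HasOrthogonalProjection] {t : 𝕜} (ht : ‖t‖ ≤ 1) (w : E) :
    ‖K.starProjection w + t • Kᗮ.starProjection w‖ ≤ ‖w‖ := by
  have horth : ⟪K.starProjection w, t • Kᗮ.starProjection w⟫_𝕜 = 0 :=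
    K.inner_right_of_mem_orthogonal (K.starProjection_apply_mem w)
      (Kᗮ.smul_mem t (Kᗮ.starProjection_apply_mem w))
  have hsum := norm_add_sq_eq_norm_sq_add_norm_sq_of_inner_eq_zero _ _ horth
  have hpyth := K.norm_sq_eq_add_norm_sq_starProjection w
  have hshrink : ‖t‖ ^ 2 * ‖Kᗮ.starProjection w‖ ^ 2 ≤ ‖Kᗮ.starProjection w‖ ^ 2 :=
    mul_le_of_le_one_left (sq_nonneg _) (pow_le_one₀ (norm_nonneg t) ht)
  rw [norm_smul] at hsum
  refine (pow_le_pow_iff_left₀ (norm_nonneg _) (norm_nonneg w) two_ne_zero).mp ?_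
  nlinarith

theorem Submodule.norm_sub_starProjection_sub_smul_le {K : Submodule 𝕜 E}
    [K.HasOrthogonalProjection] {a : E} (ha : a ∈ K) {t : 𝕜} (ht : ‖t‖ ≤ 1) (z : E) :
    ‖a - K.starProjection z - t • (z - K.starProjection z)‖ ≤ ‖z - a‖ := by
  have hsplit : a - K.starProjection z - t • (z - K.starProjection z) =
      -(K.starProjection (z - a) + t • Kᗮ.starProjection (z - a)) := by
    rw [K.starProjection_orthogonal_val, map_sub, K.starProjection_eq_self_iff.mpr ha]
    module
  rw [hsplit, norm_neg]
  exact K.norm_starProjection_add_smul_orthogonal_le ht _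

theorem le_norm_one_sub_inner {a z : E} (ha : ‖a‖ ≤ 1) :
    1 - ‖a‖ ^ 2 - ‖z - a‖ ≤ ‖1 - ⟪a, z⟫_𝕜‖ := by
  have hsplit : 1 - ⟪a, z⟫_𝕜 = ((1 - ‖a‖ ^ 2 : ℝ) : 𝕜) - ⟪a, z - a⟫_𝕜 := by
    rw [inner_sub_right, inner_self_eq_norm_sq_to_K]
    push_cast
    ring
  have hinner : ‖⟪a, z - a⟫_𝕜‖ ≤ ‖z - a‖ :=
    (norm_inner_le_norm a (z - a)).trans (mul_le_of_le_one_left (norm_nonneg _) ha)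
  calc 1 - ‖a‖ ^ 2 - ‖z - a‖ ≤ ‖((1 - ‖a‖ ^ 2 : ℝ) : 𝕜)‖ - ‖⟪a, z - a⟫_𝕜‖ := by
        gcongr
        exact (le_abs_self _).trans_eq (RCLike.norm_ofReal _).symm
    _ ≤ ‖1 - ⟪a, z⟫_𝕜‖ := hsplit ▸ norm_sub_norm_le _ _

end InnerProductSpace

theorem projLine_eq_starProjection (n : ℕ) (a z : Cn n) :
    projLine n a z = (ℂ ∙ a).starProjection z := by
  rw [Submodule.starProjection_singleton, projLine, herm, herm, inner_self_eq_norm_sq_to_K]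
  push_cast
  rfl

theorem norm_mobius_le (n : ℕ) {a z : Cn n} (ha : ‖a‖ ≤ 1) (hz : ‖z - a‖ < 1 - ‖a‖ ^ 2) :
    ‖mobius n a z‖ ≤ ‖z - a‖ / (1 - ‖a‖ ^ 2 - ‖z - a‖) := by
  have hnum := (ℂ ∙ a).norm_sub_starProjection_sub_smul_le (Submodule.mem_span_singleton_self a)
    (t := (Real.sqrt (1 - ‖a‖ ^ 2) : ℂ)) (by simp [abs_of_nonneg (Real.sqrt_nonneg _)]) z
  have hden : 1 - ‖a‖ ^ 2 - ‖z - a‖ ≤ ‖1 - herm n z a‖ := le_norm_one_sub_inner ha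
  rw [mobius, norm_smul, norm_inv, inv_mul_eq_div, projLine_eq_starProjection]
  exact div_le_div₀ (norm_nonneg _) hnum (by linarith) hden

theorem ball_subset_pseudoHyperbolic_general (n : ℕ) (r : ℝ) (hr : r ∈ Set.Ioo (0 : ℝ) 1)
    (a : Cn n) (ha : a ∈ ball (0 : Cn n) 1) :
    ball a (r * (1 - ‖a‖ ^ 2) / 2) ⊆
      {z ∈ ball (0 : Cn n) 1 | ‖mobius n a z‖ < r} := by
  obtain ⟨hr0, hr1⟩ := hr
  intro z hz
  rw [mem_ball_zero_iff] at ha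
  rw [mem_ball, dist_eq_norm] at hz
  have hA : 0 < 1 - ‖a‖ ^ 2 := by nlinarith [norm_nonneg a]
  have hzA : ‖z - a‖ < 1 - ‖a‖ ^ 2 := by nlinarith
  refine ⟨?_, ?_⟩
  · rw [mem_ball_zero_iff]
    nlinarith [norm_le_norm_add_norm_sub' z a, sq_nonneg (1 - ‖a‖)]
  · calc ‖mobius n a z‖ ≤ ‖z - a‖ / (1 - ‖a‖ ^ 2 - ‖z - a‖) := norm_mobius_le n ha.le hzA
      _ < r := (div_lt_iff₀ (by linarith)).mpr (by nlinarith [norm_nonneg (z - a)])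

/-- For `r ∈ (0,1)` and a nonzero `a` in the unit ball of `ℂⁿ`, the Euclidean
ball `Bⁿ(a, r(1−|a|²)/2)` is contained in the pseudo-hyperbolic ball
`E(a,r) = {z ∈ Bⁿ : |φ_a(z)| < r}`. -/
theorem ball_subset_pseudoHyperbolic (n : ℕ) (r : ℝ) (hr : r ∈ Set.Ioo (0 : ℝ) 1)
    (a : Cn n) (ha : a ∈ ball (0 : Cn n) 1) (ha0 : a ≠ 0) :
    ball a (r * (1 - ‖a‖ ^ 2) / 2) ⊆
      {z ∈ ball (0 : Cn n) 1 | ‖mobius n a z‖ < r} :=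
  ball_subset_pseudoHyperbolic_general n r hr a ha
end
end

section
/- Let r ∈ (0,1), let z be a point of the unit ball B^n of C^n, and let w ∈ B^n(z, r(1−|z|²)/2) with w ≠ z. Then (1−|z|²)^{1/2}(1−|w|²)^{1/2} / |z − w| ≥ √(1−r²) / r. -/
open MeasureTheory Metric Complex

noncomputable section

/-!
With `s = 1 - ‖z‖²` and `d = ‖z - w‖ < r s / 2 ≤ s / 2`, the triangle inequality gives
`1 - ‖w‖² ≥ 1 - (‖z‖ + d)² ≥ s - 2d ≥ (1 - r) s`, hence
`r² s (1 - ‖w‖²) ≥ (1 - r) r² s² ≥ (1 - r²) (r s / 2)² > (1 - r²) d²`.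
-/

theorem one_sub_sq_norm_sub_two_mul_le {E : Type*} [SeminormedAddCommGroup E] {z w : E}
    (hz : ‖z‖ < 1) (hd : ‖z - w‖ ≤ (1 - ‖z‖ ^ 2) / 2) :
    1 - ‖z‖ ^ 2 - 2 * ‖z - w‖ ≤ 1 - ‖w‖ ^ 2 := by
  have hw : ‖w‖ ≤ ‖z‖ + ‖z - w‖ := norm_le_norm_add_norm_sub' w z |>.trans_eq (by
    rw [norm_sub_rev])
  have hd' : ‖z - w‖ ≤ 2 * (1 - ‖z‖) := by nlinarith [norm_nonneg z]
  nlinarith [norm_nonneg w, norm_nonneg (z - w)]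

theorem one_sub_sq_mul_sq_le {r s d b : ℝ} (hr : r ∈ Set.Ioo (0 : ℝ) 1) (hd₀ : 0 ≤ d)
    (hd : d ≤ r * s / 2) (hb : s - 2 * d ≤ b) :
    (1 - r ^ 2) * d ^ 2 ≤ r ^ 2 * s * b := by
  obtain ⟨hr0, hr1⟩ := hr
  have hs : 0 ≤ s := by nlinarith
  calc (1 - r ^ 2) * d ^ 2 ≤ (1 - r ^ 2) * (r * s / 2) ^ 2 := by gcongr; nlinarith
    _ ≤ r ^ 2 * s * ((1 - r) * s) := by
      nlinarith [mul_nonneg (mul_nonneg (sq_nonneg (r * s)) (sub_nonneg.2 hr1.le))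
        (by linarith : (0 : ℝ) ≤ 3 - r)]
    _ ≤ r ^ 2 * s * b := by gcongr; nlinarith

theorem sqrt_div_le_sqrt_mul_sqrt_div {x a b p q : ℝ} (hp : 0 < p) (hq : 0 < q) (ha : 0 ≤ a)
    (h : x * q ^ 2 ≤ a * b * p ^ 2) :
    Real.sqrt x / p ≤ Real.sqrt a * Real.sqrt b / q := by
  rw [div_le_div_iff₀ hp hq, ← Real.sqrt_mul ha, ← Real.sqrt_sq hq.le, ← Real.sqrt_sq hp.le,
    ← Real.sqrt_mul' _ (sq_nonneg q), ← Real.sqrt_mul' _ (sq_nonneg p)]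
  exact Real.sqrt_le_sqrt h

/-- For `r ∈ (0,1)`, `z` in the unit ball of `ℂⁿ`, and
`w ∈ Bⁿ(z, r(1−|z|²)/2)` with `w ≠ z`,
`(1−|z|²)^{1/2}(1−|w|²)^{1/2}/|z − w| ≥ √(1−r²)/r`. -/
theorem sqrt_weights_div_dist_ge (n : ℕ) (r : ℝ) (hr : r ∈ Set.Ioo (0 : ℝ) 1)
    (z w : Cn n) (hz : z ∈ ball (0 : Cn n) 1)
    (hw : w ∈ ball z (r * (1 - ‖z‖ ^ 2) / 2)) (hwz : w ≠ z) :
    Real.sqrt (1 - ‖z‖ ^ 2) * Real.sqrt (1 - ‖w‖ ^ 2) / ‖z - w‖ ≥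
      Real.sqrt (1 - r ^ 2) / r := by
  have hz' : ‖z‖ < 1 := mem_ball_zero_iff.mp hz
  have hd : ‖z - w‖ < r * (1 - ‖z‖ ^ 2) / 2 := by rwa [mem_ball, dist_comm, dist_eq_norm] at hw
  have hd₀ : 0 < ‖z - w‖ := norm_pos_iff.mpr (sub_ne_zero.mpr hwz.symm)
  have hs : 0 ≤ 1 - ‖z‖ ^ 2 := by nlinarith [norm_nonneg z]
  have hw' : 1 - ‖z‖ ^ 2 - 2 * ‖z - w‖ ≤ 1 - ‖w‖ ^ 2 :=
    one_sub_sq_norm_sub_two_mul_le hz' (by nlinarith [hr.2])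
  refine sqrt_div_le_sqrt_mul_sqrt_div hr.1 hd₀ hs ?_
  linarith [one_sub_sq_mul_sq_le hr hd₀.le hd.le hw']
end
end
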